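/- Define p(t) = ∫₀^π (sin²ψ − 2cos²ψ)(sin²ψ + 4 sin⁴ψ)(sin²ψ + t cos²ψ)^{-3/2} sin ψ dψ for t ≥ 0. Then p(t) > 0 for every t > 0. -/

import Mathlib

open MeasureTheory Real

noncomputable section

/-- The function
`p(t) = ∫₀^π (sin²ψ − 2cos²ψ)(sin²ψ + 4sin⁴ψ)(sin²ψ + t cos²ψ)^{-3/2} sin ψ dψ`. -/
def pfun (t : ℝ) : ℝ :=
  ∫ ψ in (0:ℝ)..Real.pi,
    (Real.sin ψ ^ 2 - 2 * Real.cos ψ ^ 2) * (Real.sin ψ ^ 2 + 4 * Real.sin ψ ^ 4) *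
      ((Real.sin ψ ^ 2 + t * Real.cos ψ ^ 2) ^ ((3:ℝ)/2))⁻¹ * Real.sin ψ

/-!
On `[0, π]` the integrand of `p(t)` is `g(ψ) X_t(ψ)^{3/2}` with
`g = (sin²ψ − 2cos²ψ)(1 + 4sin²ψ)` and `X_t = sin²ψ / (sin²ψ + t cos²ψ)`.
Since `∫₀^π g = 0` (this is `p(0) = 0`), `p(t) = ∫₀^π g (X_t^{3/2} − μ^{3/2})` for any constant `μ`.
Choosing `μ = 2/(2+t)`, the value of `X_t` where `g` changes sign, the identity
`sin²ψ − 2cos²ψ = (2+t)(sin²ψ + t cos²ψ)/t · (X_t − μ)` shows that the new integrand is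
nonnegative; it is positive at `ψ = π/2`.
-/

theorem integral_sin_sq_sub_two_cos_sq_mul_one_add_four_sin_sq :
    ∫ ψ in (0)..π, (sin ψ ^ 2 - 2 * cos ψ ^ 2) * (1 + 4 * sin ψ ^ 2) = 0 := by
  have hsin4 : ∫ ψ in (0)..π, sin ψ ^ 4 = 3 * π / 8 := by
    have h := integral_sin_pow_even (n := 2)
    simp only [Finset.prod_range_succ, Finset.prod_range_zero] at h
    rw [h]
    ring
  have hexpand : ∀ ψ, (sin ψ ^ 2 - 2 * cos ψ ^ 2) * (1 + 4 * sin ψ ^ 2) =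
      12 * sin ψ ^ 4 - 5 * sin ψ ^ 2 - 2 := fun ψ => by
    rw [cos_sq']
    ring
  simp_rw [hexpand]
  rw [intervalIntegral.integral_sub, intervalIntegral.integral_sub,
    intervalIntegral.integral_const_mul, intervalIntegral.integral_const_mul, hsin4]
  · simp
    ring
  all_goals apply Continuous.intervalIntegrable; fun_prop

def sinSqRatio (t ψ : ℝ) : ℝ := sin ψ ^ 2 / (sin ψ ^ 2 + t * cos ψ ^ 2)

section

variable {t : ℝ}

theorem sin_sq_add_mul_cos_sq_pos (ht : 0 < t) (ψ : ℝ) : 0 < sin ψ ^ 2 + t * cos ψ ^ 2 := by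
  rcases (sq_nonneg (cos ψ)).eq_or_lt with hc | hc
  · nlinarith [sin_sq_add_cos_sq ψ]
  · nlinarith [mul_pos ht hc, sq_nonneg (sin ψ)]

theorem continuous_sinSqRatio (ht : 0 < t) : Continuous (sinSqRatio t) :=
  Continuous.div (by fun_prop) (by fun_prop) fun ψ => (sin_sq_add_mul_cos_sq_pos ht ψ).ne'

theorem sinSqRatio_nonneg (ht : 0 ≤ t) (ψ : ℝ) : 0 ≤ sinSqRatio t ψ := by
  unfold sinSqRatio
  positivity

theorem sin_sq_sub_two_cos_sq_eq (ht : 0 < t) (ψ : ℝ) :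
    sin ψ ^ 2 - 2 * cos ψ ^ 2 =
      (2 + t) * (sin ψ ^ 2 + t * cos ψ ^ 2) / t * (sinSqRatio t ψ - 2 / (2 + t)) := by
  have hr := (sin_sq_add_mul_cos_sq_pos ht ψ).ne'
  have h2t : 2 + t ≠ 0 := by positivity
  unfold sinSqRatio
  rw [eq_comm, div_mul_eq_mul_div, div_eq_iff ht.ne', div_sub_div _ _ hr h2t, mul_div_assoc',
    div_eq_iff (mul_ne_zero hr h2t)]
  ring

theorem pfun_eq_integral_sinSqRatio (ht : 0 ≤ t) :
    pfun t = ∫ ψ in (0)..π,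
      (sin ψ ^ 2 - 2 * cos ψ ^ 2) * (1 + 4 * sin ψ ^ 2) * sinSqRatio t ψ ^ (3 / 2 : ℝ) := by
  refine intervalIntegral.integral_congr fun ψ hψ => ?_
  rw [Set.uIcc_of_le pi_pos.le] at hψ
  have hs : 0 ≤ sin ψ := sin_nonneg_of_nonneg_of_le_pi hψ.1 hψ.2
  have hsin : (sin ψ ^ 2) ^ (3 / 2 : ℝ) = sin ψ ^ 3 := by
    rw [← rpow_natCast, ← rpow_mul hs]
    norm_num
  simp only [sinSqRatio]
  rw [div_rpow (sq_nonneg _) (by positivity), hsin]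
  ring

theorem mul_sinSqRatio_rpow_sub_rpow_nonneg (ht : 0 < t) (ψ : ℝ) :
    0 ≤ (sin ψ ^ 2 - 2 * cos ψ ^ 2) * (1 + 4 * sin ψ ^ 2) *
      (sinSqRatio t ψ ^ (3 / 2 : ℝ) - (2 / (2 + t)) ^ (3 / 2 : ℝ)) := by
  have hmonovary : 0 ≤ (sinSqRatio t ψ ^ (3 / 2 : ℝ) - (2 / (2 + t)) ^ (3 / 2 : ℝ)) *
      (sinSqRatio t ψ - 2 / (2 + t)) :=
    ((monotoneOn_rpow_Ici_of_exponent_nonneg (by norm_num)).monovaryOn monotoneOn_id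
      ).sub_mul_sub_nonneg (Set.mem_Ici.2 (by positivity)) (Set.mem_Ici.2 (sinSqRatio_nonneg ht.le ψ))
  have hr := sin_sq_add_mul_cos_sq_pos ht ψ
  rw [sin_sq_sub_two_cos_sq_eq ht]
  calc (0 : ℝ) ≤ (2 + t) * (sin ψ ^ 2 + t * cos ψ ^ 2) / t * (1 + 4 * sin ψ ^ 2) *
        ((sinSqRatio t ψ ^ (3 / 2 : ℝ) - (2 / (2 + t)) ^ (3 / 2 : ℝ)) *
          (sinSqRatio t ψ - 2 / (2 + t))) := by positivity
    _ = _ := by ring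

end

/-- `p(t) > 0` for every `t > 0`. -/
theorem pfun_pos (t : ℝ) (ht : 0 < t) : 0 < pfun t := by
  set c := (2 / (2 + t)) ^ (3 / 2 : ℝ)
  have hc : c < 1 :=
    rpow_lt_one (by positivity) ((div_lt_one (by positivity)).2 (by linarith)) (by norm_num)
  have hX := continuous_sinSqRatio ht
  have hshift : pfun t = ∫ ψ in (0)..π, (sin ψ ^ 2 - 2 * cos ψ ^ 2) * (1 + 4 * sin ψ ^ 2) *
      (sinSqRatio t ψ ^ (3 / 2 : ℝ) - c) := by
    simp_rw [mul_sub]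
    rw [intervalIntegral.integral_sub, intervalIntegral.integral_mul_const,
      integral_sin_sq_sub_two_cos_sq_mul_one_add_four_sin_sq, pfun_eq_integral_sinSqRatio ht.le]
    · simp
    all_goals apply Continuous.intervalIntegrable; fun_prop (disch := norm_num)
  rw [hshift]
  refine intervalIntegral.integral_pos pi_pos (by fun_prop (disch := norm_num))
    (fun ψ _ => mul_sinSqRatio_rpow_sub_rpow_nonneg ht ψ)
    ⟨π / 2, ⟨by linarith [pi_pos], by linarith [pi_pos]⟩, ?_⟩
  simp [sinSqRatio]
  linarith

end
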